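/- arXiv:2108.08033 — 2 statements merged into one kernel-verified Lean document; each statement's English description precedes it below -/
import Mathlib

section
/- For all integers $m, n \ge 1$, there exists a coloring of the subsets of $[m+n]$ with two colors $1$ and $2$ under which no copy of $\mathbf{V}_{m,m}$ has all sets of color $1$ and no copy of $\mathbf{V}_{n,n}$ has all sets of color $2$. Explicitly, color $X$ with $1$ if $0 \le |X| < m$ and with $2$ if $m \le |X| \le m+n$. (Hence $R(\mathbf{V}_{m,m},\mathbf{V}_{n,n}) \ge m+n+1$, and combined with the upper bound, $R(\mathbf{V}_{m,m},\mathbf{V}_{n,n}) = m+n+1$.) -/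
/-- A copy of `V_{m,n}` in the Boolean lattice on `Fin N`, all of whose sets receive
the color `col` under the coloring `c`. -/
def VCopyColored {N : ℕ} {α : Type*} (m n : ℕ) (c : Finset (Fin N) → α) (col : α) : Prop :=
  ∃ (X : Finset (Fin N)) (Y : Fin m → Finset (Fin N)) (Z : Fin n → Finset (Fin N)),
    StrictMono Y ∧ StrictMono Z ∧ (∀ i, X ⊂ Y i) ∧ (∀ j, X ⊂ Z j) ∧
    (∀ i j, ¬Y i ⊆ Z j ∧ ¬Z j ⊆ Y i) ∧
    c X = col ∧ (∀ i, c (Y i) = col) ∧ (∀ j, c (Z j) = col)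

/-! Color the sets of size `< m` with `0` and the others with `1`. A chain `X ⊂ Y₀ ⊂ ⋯ ⊂ Y_{m-1}`
climbs `m` levels, so it cannot stay below level `m`. In color `1` the base `X` already has
size `≥ m`, so a chain of length `n` above it reaches the top `[m+n]`, which is comparable to
everything, leaving no room for the incomparable branch `Z`. -/

lemma Fin.add_val_lt_of_strictMono {k a : ℕ} {f : Fin k → ℕ} (hf : StrictMono f)
    (ha : ∀ i, a < f i) (i : Fin k) : a + i < f i := by
  obtain ⟨v, hv⟩ := i
  induction v with
  | zero => exact ha _
  | succ v ih =>
    have hstep : f ⟨v, by omega⟩ < f ⟨v + 1, hv⟩ := hf (Fin.mk_lt_mk.mpr v.lt_succ_self)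
    have := ih (by omega)
    simp only at this ⊢
    omega

lemma Finset.card_add_val_lt_of_strictMono {α : Type*} {k : ℕ} {X : Finset α}
    {Y : Fin k → Finset α} (hY : StrictMono Y) (hXY : ∀ i, X ⊂ Y i) (i : Fin k) :
    X.card + i < (Y i).card :=
  Fin.add_val_lt_of_strictMono (Finset.card_strictMono.comp hY)
    (fun i => Finset.card_lt_card (hXY i)) i

def cardThresholdColoring {N : ℕ} (m : ℕ) (X : Finset (Fin N)) : Fin 2 :=
  if X.card < m then 0 else 1

lemma cardThresholdColoring_eq_zero {N m : ℕ} {X : Finset (Fin N)} :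
    cardThresholdColoring m X = 0 ↔ X.card < m := by
  unfold cardThresholdColoring
  split_ifs <;> simp [*]

lemma cardThresholdColoring_eq_one {N m : ℕ} {X : Finset (Fin N)} :
    cardThresholdColoring m X = 1 ↔ m ≤ X.card := by
  unfold cardThresholdColoring
  split_ifs <;> simp_all

lemma not_vCopyColored_cardThresholdColoring_zero {N : ℕ} (m k : ℕ) :
    ¬VCopyColored m k (cardThresholdColoring (N := N) m) 0 := by
  rintro ⟨X, Y, -, hY, -, hXY, -, -, hX, hYcol, -⟩
  cases m with
  | zero => exact Nat.not_lt_zero _ (cardThresholdColoring_eq_zero.mp hX)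
  | succ m =>
    have hclimb := Finset.card_add_val_lt_of_strictMono hY hXY (Fin.last m)
    have htop := cardThresholdColoring_eq_zero.mp (hYcol (Fin.last m))
    simp only [Fin.val_last] at hclimb
    omega

lemma not_vCopyColored_cardThresholdColoring_one {m n k : ℕ} (hn : 1 ≤ n) (hk : 1 ≤ k) :
    ¬VCopyColored n k (cardThresholdColoring (N := m + n) m) 1 := by
  rintro ⟨X, Y, Z, hY, -, hXY, -, hinc, hX, -, -⟩
  have htop : n - 1 < n := by omega
  have hclimb := Finset.card_add_val_lt_of_strictMono hY hXY ⟨n - 1, htop⟩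
  have hbase := cardThresholdColoring_eq_one.mp hX
  have hbound : (Y ⟨n - 1, htop⟩).card ≤ m + n := by
    simpa using Finset.card_le_univ (Y ⟨n - 1, htop⟩)
  have huniv : Y ⟨n - 1, htop⟩ = Finset.univ :=
    Finset.eq_univ_of_card _ (by rw [Fintype.card_fin]; simp only at hclimb; omega)
  exact (hinc ⟨n - 1, htop⟩ ⟨0, hk⟩).2 (huniv ▸ Finset.subset_univ _)

theorem R_Vmm_Vnn_lower_general (m n : ℕ) (hn : 1 ≤ n) :
    ∃ c : Finset (Fin (m + n)) → Fin 2,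
      ¬VCopyColored m m c 0 ∧ ¬VCopyColored n n c 1 :=
  ⟨cardThresholdColoring m, not_vCopyColored_cardThresholdColoring_zero m m,
    not_vCopyColored_cardThresholdColoring_one hn hn⟩

/-- There is a `2`-coloring (colors `0` and `1`) of the subsets of `[m+n]` admitting
no copy of `V_{m,m}` in color `0` and no copy of `V_{n,n}` in color `1`.
Hence `R(V_{m,m}, V_{n,n}) ≥ m + n + 1`. -/
theorem R_Vmm_Vnn_lower (m n : ℕ) (hm : 1 ≤ m) (hn : 1 ≤ n) :
    ∃ c : Finset (Fin (m + n)) → Fin 2,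
      ¬VCopyColored m m c 0 ∧ ¬VCopyColored n n c 1 :=
  R_Vmm_Vnn_lower_general m n hn
end

section
/- For all integers $k \ge 2$ and $1 \le m < n$, there exists a coloring of the subsets of $[n(k-1)+1]$ (with an arbitrary set of colors) containing no monochromatic copy of $\mathbf{V}_{m,n}$ and no rainbow copy of $\mathbf{A}_k$ (no $k$ pairwise incomparable subsets with pairwise distinct colors). Explicitly: color each subset $X \notin \{\varnothing, [n(k-1)+1]\}$ with color $\lceil |X|/n \rceil$ and color $\varnothing$ and $[n(k-1)+1]$ with color $k$. (Hence $RR(\mathbf{V}_{m,n},\mathbf{A}_k) > n(k-1)+1$.) -/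
open Finset

variable {α : Type*} [Fintype α]

lemma ne_empty_and_ne_univ_of_antichain {ι : Type*} {f : ι → Finset α}
    (hf : ∀ i j, i ≠ j → ¬f i ⊆ f j) {i j : ι} (hij : i ≠ j) : f i ≠ ∅ ∧ f i ≠ univ :=
  ⟨fun h => hf i j hij (by simp [h]), fun h => hf j i hij.symm (by simp [h])⟩

variable [DecidableEq α]

/-- The statement's coloring, with every color lowered by one: a set `X ∉ {∅, univ}` gets
`(|X| - 1) / n = ⌈|X| / n⌉ - 1`, while `∅` and `univ` get the top color `c`. -/
def layerColoring (n c : ℕ) (X : Finset α) : ℕ :=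
  if X = ∅ ∨ X = univ then c else (#X - 1) / n

section layerColoring

variable {n c : ℕ} {X : Finset α}

lemma layerColoring_of_ne (h0 : X ≠ ∅) (hU : X ≠ univ) :
    layerColoring n c X = (#X - 1) / n :=
  if_neg (by tauto)

lemma layerColoring_lt_of_ne (hα : Fintype.card α ≤ n * c + 1) (h0 : X ≠ ∅) (hU : X ≠ univ) :
    layerColoring n c X < c := by
  have hpos : 0 < #X := card_pos.2 (nonempty_iff_ne_empty.2 h0)
  have hlt : #X < Fintype.card α := card_univ (α := α) ▸ card_lt_card (ssubset_univ_iff.2 hU)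
  rw [layerColoring_of_ne h0 hU]
  exact Nat.div_lt_of_lt_mul (by omega)

lemma layerColoring_eq_top_iff (hα : Fintype.card α ≤ n * c + 1) :
    layerColoring n c X = c ↔ X = ∅ ∨ X = univ := by
  refine ⟨fun h => ?_, fun h => if_pos h⟩
  by_contra hX
  obtain ⟨h0, hU⟩ := not_or.1 hX
  exact (layerColoring_lt_of_ne hα h0 hU).ne h

lemma card_mem_Icc_of_layerColoring_eq {col : ℕ} (hn : 0 < n) (h0 : X ≠ ∅) (hU : X ≠ univ)
    (hX : layerColoring n c X = col) : #X ∈ Icc (col * n + 1) (col * n + n) := by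
  have hpos : 0 < #X := card_pos.2 (nonempty_iff_ne_empty.2 h0)
  rw [layerColoring_of_ne h0 hU, Nat.div_eq_iff hn] at hX
  rw [mem_Icc]
  omega

lemma subset_or_subset_of_layerColoring_eq_top (hα : Fintype.card α ≤ n * c + 1)
    {A B : Finset α} (hA : layerColoring n c A = c) (hB : layerColoring n c B = c) :
    A ⊆ B ∨ B ⊆ A := by
  rcases (layerColoring_eq_top_iff hα).1 hA with rfl | rfl <;>
    rcases (layerColoring_eq_top_iff hα).1 hB with rfl | rfl <;> simp

/-- The sets of a color `col ≠ c` have only `n` distinct sizes. -/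
lemma not_strictMono_of_layerColoring_eq (hn : 0 < n) {col : ℕ} (hcol : col ≠ c)
    {g : Fin (n + 1) → Finset α} (hg : ∀ i, layerColoring n c (g i) = col) : ¬StrictMono g := by
  intro hmono
  have hsizes : ∀ i, #(g i) ∈ Icc (col * n + 1) (col * n + n) := fun i => by
    have hX : ¬(g i = ∅ ∨ g i = univ) := fun h => hcol ((hg i).symm.trans (if_pos h))
    obtain ⟨h0, hU⟩ := not_or.1 hX
    exact card_mem_Icc_of_layerColoring_eq hn h0 hU (hg i)
  have := card_le_card_of_injOn (s := univ) (fun i => #(g i)) (fun i _ => hsizes i)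
    (card_strictMono.comp hmono).injective.injOn
  simp at this

end layerColoring

lemma card_le_of_rainbow_antichain {n c : ℕ} (hα : Fintype.card α ≤ n * c + 1) {ι : Type*}
    [Fintype ι] [Nontrivial ι] {f : ι → Finset α} (hf : ∀ i j, i ≠ j → ¬f i ⊆ f j)
    (hrainbow : ∀ i j, i ≠ j → layerColoring n c (f i) ≠ layerColoring n c (f j)) :
    Fintype.card ι ≤ c := by
  have hlt : ∀ i, layerColoring n c (f i) < c := fun i => by
    obtain ⟨j, hj⟩ := exists_ne i
    obtain ⟨h0, hU⟩ := ne_empty_and_ne_univ_of_antichain hf hj.symm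
    exact layerColoring_lt_of_ne hα h0 hU
  simpa using card_le_card_of_injOn (s := univ) (t := range c)
    (fun i => layerColoring n c (f i)) (fun i _ => by simpa using hlt i)
    (fun i _ j _ hij => by_contra fun hne => hrainbow i j hne hij)

lemma not_vCopyColored_layerColoring {N m n c : ℕ} (hN : N ≤ n * c + 1) (hm : 1 ≤ m)
    (hn : 0 < n) : ¬∃ col, VCopyColored m n (layerColoring n c : Finset (Fin N) → ℕ) col := by
  have hα : Fintype.card (Fin N) ≤ n * c + 1 := by simpa using hN
  rintro ⟨col, X, Y, Z, -, hZ, -, hXZ, hYZ, hcX, hcY, hcZ⟩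
  by_cases hcol : col = c
  · subst hcol
    rcases subset_or_subset_of_layerColoring_eq_top hα (hcY ⟨0, hm⟩) (hcZ ⟨0, hn⟩) with h | h
    exacts [(hYZ _ _).1 h, (hYZ _ _).2 h]
  · exact not_strictMono_of_layerColoring_eq hn hcol (g := Fin.cons X Z)
      (Fin.cases hcX hcZ) (Fin.strictMono_cons.2 ⟨hXZ, hZ⟩)

/-- For `k ≥ 2` and `1 ≤ m < n` there is a coloring of the subsets of
`[n(k-1)+1]` with no monochromatic copy of `V_{m,n}` and no rainbow copy of
`A_k` (`k` pairwise incomparable sets with pairwise distinct colors).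
Hence `RR(V_{m,n}, A_k) > n(k-1)+1`. -/
theorem RR_Vmn_Ak_lower (k m n : ℕ) (hk : 2 ≤ k) (hm : 1 ≤ m) (hmn : m < n) :
    ∃ c : Finset (Fin (n * (k - 1) + 1)) → ℕ,
      (¬∃ col, VCopyColored m n c col) ∧
      ¬∃ f : Fin k → Finset (Fin (n * (k - 1) + 1)),
        (∀ i j, i ≠ j → ¬f i ⊆ f j) ∧ (∀ i j, i ≠ j → c (f i) ≠ c (f j)) := by
  refine ⟨layerColoring n (k - 1), not_vCopyColored_layerColoring le_rfl hm (by omega), ?_⟩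
  rintro ⟨f, hanti, hrainbow⟩
  have : Nontrivial (Fin k) := Fin.nontrivial_iff_two_le.2 hk
  have := card_le_of_rainbow_antichain (by simp) hanti hrainbow
  simp only [Fintype.card_fin] at this
  omega
end
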